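/- If (X,d) is a Ptolemy metric space and p ∈ X, then the metric χ_p(x,y) = log(1 + d(x,y)/(d(p,x)·d(p,y))) on X \ {p} is strongly hyperbolic with parameter 2: exp(χ_p(x,y)+χ_p(z,t)) ≤ exp(χ_p(x,z)+χ_p(y,t)) + exp(χ_p(x,t)+χ_p(z,y)) for all x,y,z,t ∈ X \ {p}. -/

import Mathlib

/-!
Write `d_p(x, y) = d(x, y) / (d(p, x) d(p, y))`, so that `exp χ_p = 1 + d_p`. Ptolemy's inequality for
`d` with `p` as one of the four points is the triangle inequality for `d_p`, and Ptolemy's inequality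
for `x, y, z, t` is the same inequality for `d_p`. Expanding the products, the claim then reduces to
`d_p(x,y) + d_p(z,t) ≤ d_p(x,z) + d_p(y,t) + d_p(x,t) + d_p(z,y)`, which is half the sum of four triangle
inequalities.
-/

open Real

def IsPtolemy (X : Type*) [MetricSpace X] : Prop :=
  ∀ x1 x2 x3 x4 : X, dist x1 x2 * dist x3 x4 ≤ dist x1 x4 * dist x2 x3 + dist x1 x3 * dist x2 x4

noncomputable def inversionDist {X : Type*} [MetricSpace X] (p x y : X) : ℝ :=
  dist x y / (dist p x * dist p y)

section Inversion

variable {X : Type*} [MetricSpace X] {p : X}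

lemma inversionDist_nonneg (x y : X) : 0 ≤ inversionDist p x y := by
  unfold inversionDist
  positivity

lemma inversionDist_comm (x y : X) : inversionDist p x y = inversionDist p y x := by
  simp only [inversionDist, dist_comm x y, mul_comm]

lemma IsPtolemy.inversionDist_triangle (hX : IsPtolemy X) {x y z : X}
    (hx : x ≠ p) (hy : y ≠ p) (hz : z ≠ p) :
    inversionDist p x z ≤ inversionDist p x y + inversionDist p y z := by
  have ha : dist p x ≠ 0 := dist_ne_zero.2 hx.symm
  have hb : dist p y ≠ 0 := dist_ne_zero.2 hy.symm
  have hc : dist p z ≠ 0 := dist_ne_zero.2 hz.symm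
  have h : dist x z * dist p y ≤ dist p x * dist y z + dist x y * dist p z := by
    simpa only [dist_comm _ p, dist_comm z y] using hX x z y p
  calc inversionDist p x z = dist x z * dist p y / (dist p x * dist p y * dist p z) := by
        unfold inversionDist; field_simp
    _ ≤ (dist p x * dist y z + dist x y * dist p z) / (dist p x * dist p y * dist p z) := by
        gcongr
    _ = inversionDist p x y + inversionDist p y z := by
        unfold inversionDist; field_simp; ring

lemma IsPtolemy.inversionDist_ptolemy (hX : IsPtolemy X) (x y z t : X) :
    inversionDist p x y * inversionDist p z t ≤
      inversionDist p x t * inversionDist p y z + inversionDist p x z * inversionDist p y t := by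
  simp only [inversionDist, div_mul_div_comm]
  rw [show dist p x * dist p t * (dist p y * dist p z) = dist p x * dist p y * (dist p z * dist p t)
      by ring, show dist p x * dist p z * (dist p y * dist p t) = dist p x * dist p y * (dist p z * dist p t)
      by ring, ← add_div]
  exact div_le_div_of_nonneg_right (hX x y z t) (by positivity)

end Inversion

lemma one_add_mul_one_add_le_of_ptolemy {P Q R S T U : ℝ} (hPQ : P * Q ≤ T * U + R * S)
    (hP₁ : P ≤ R + U) (hP₂ : P ≤ T + S) (hQ₁ : Q ≤ R + T) (hQ₂ : Q ≤ U + S) :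
    (1 + P) * (1 + Q) ≤ (1 + R) * (1 + S) + (1 + T) * (1 + U) := by
  have hsum : P + Q ≤ R + S + T + U := by linarith
  linear_combination hsum + hPQ

theorem stmt13 {X : Type*} [MetricSpace X]
    (hPt : ∀ x1 x2 x3 x4 : X,
      dist x1 x2 * dist x3 x4 ≤ dist x1 x4 * dist x2 x3 + dist x1 x3 * dist x2 x4)
    (p : X) :
    let χ : X → X → ℝ := fun x y => Real.log (1 + dist x y / (dist p x * dist p y))
    ∀ x y z t : X, x ≠ p → y ≠ p → z ≠ p → t ≠ p →
      Real.exp (χ x y + χ z t) ≤ Real.exp (χ x z + χ y t) + Real.exp (χ x t + χ z y) := by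
  intro χ x y z t hx hy hz ht
  have hX : IsPtolemy X := hPt
  have exp_χ : ∀ u v : X, exp (χ u v) = 1 + inversionDist p u v := fun u v =>
    exp_log (add_pos_of_pos_of_nonneg one_pos (inversionDist_nonneg u v))
  simp only [exp_add, exp_χ]
  apply one_add_mul_one_add_le_of_ptolemy
  · rw [inversionDist_comm z y]
    exact hX.inversionDist_ptolemy x y z t
  · exact hX.inversionDist_triangle hx hz hy
  · exact (hX.inversionDist_triangle hx ht hy).trans_eq (by rw [inversionDist_comm t y])
  · exact (hX.inversionDist_triangle hz hx ht).trans_eq (by rw [inversionDist_comm z x])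
  · exact hX.inversionDist_triangle hz hy ht
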